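/- For β > 1, m(β) satisfies β(1 − m(β)²) < 1; equivalently the derivative of x ↦ tanh(βx) at x = m(β) is strictly less than 1. -/

import Mathlib

/-!
Put `t = β m` with `m = cwM β > 0`. From `m = tanh t` and `cosh² t - sinh² t = 1` one gets
`1 - m² = 1 / cosh² t` and `β = t / m`, hence `β (1 - m²) = t / (sinh t cosh t)`, which is `< 1`
because `t < sinh t ≤ sinh t cosh t` for `t > 0`. That `m > 0` is a fixed point comes from the
intermediate value theorem: `tanh (β x) > x` for small `x > 0` (as `β > 1`) while `tanh (β x) < 1`.
-/

open Real Filter Topology Set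

/-- `m β` is the largest solution of the Curie-Weiss equation `tanh (β * x) = x`. -/
noncomputable def cwM (β : ℝ) : ℝ := sSup {x : ℝ | Real.tanh (β * x) = x}

namespace Real

theorem hasDerivAt_tanh (x : ℝ) : HasDerivAt tanh (1 - tanh x ^ 2) x := by
  have h := (hasDerivAt_sinh x).div (hasDerivAt_cosh x) (cosh_pos x).ne'
  have hfun : sinh / cosh = tanh := funext fun y => (tanh_eq_sinh_div_cosh y).symm
  refine hfun ▸ h.congr_deriv ?_
  rw [Pi.div_apply]
  field_simp

theorem continuous_tanh : Continuous tanh :=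
  continuous_iff_continuousAt.2 fun x => (hasDerivAt_tanh x).continuousAt

end Real

theorem lt_tanh_mul_of_cosh_lt {β x : ℝ} (hx : 0 < x) (h : cosh (β * x) < β) :
    x < tanh (β * x) := by
  have hcosh := cosh_pos (β * x)
  have hβx : 0 < β * x := mul_pos (by linarith [one_le_cosh (β * x)]) hx
  rw [tanh_eq_sinh_div_cosh, lt_div_iff₀ hcosh]
  calc x * cosh (β * x) < x * β := mul_lt_mul_of_pos_left h hx
    _ = β * x := mul_comm x β
    _ < sinh (β * x) := self_lt_sinh_iff.2 hβx

theorem exists_pos_lt_tanh_mul {β : ℝ} (hβ : 1 < β) : ∃ x, 0 < x ∧ x < tanh (β * x) := by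
  have hcont : Continuous fun x => cosh (β * x) := by fun_prop
  have hsmall : ∀ᶠ x in 𝓝[>] (0 : ℝ), cosh (β * x) < β :=
    nhdsWithin_le_nhds <| hcont.continuousAt.eventually_lt continuousAt_const (by simpa using hβ)
  obtain ⟨x, hx, hxpos⟩ := (hsmall.and self_mem_nhdsWithin).exists
  exact ⟨x, hxpos, lt_tanh_mul_of_cosh_lt hxpos hx⟩

theorem exists_pos_tanh_mul_eq_self {β : ℝ} (hβ : 1 < β) : ∃ x, 0 < x ∧ tanh (β * x) = x := by
  obtain ⟨x₀, hx₀, hlt⟩ := exists_pos_lt_tanh_mul hβ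
  have hx₀_lt_one : x₀ < 1 := hlt.trans (tanh_lt_one _)
  have hcont : ContinuousOn (fun x => tanh (β * x) - x) (Icc x₀ 1) := by
    have := continuous_tanh; fun_prop
  have hzero : (0 : ℝ) ∈ Icc (tanh (β * 1) - 1) (tanh (β * x₀) - x₀) :=
    ⟨by linarith [tanh_lt_one (β * 1)], by linarith⟩
  obtain ⟨c, hc, hfix⟩ := intermediate_value_Icc' hx₀_lt_one.le hcont hzero
  exact ⟨c, hx₀.trans_le hc.1, sub_eq_zero.1 hfix⟩

theorem isClosed_setOf_tanh_mul_eq (β : ℝ) : IsClosed {x : ℝ | tanh (β * x) = x} :=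
  isClosed_eq (by have := continuous_tanh; fun_prop) continuous_id

theorem bddAbove_setOf_tanh_mul_eq (β : ℝ) : BddAbove {x : ℝ | tanh (β * x) = x} :=
  ⟨1, fun _ hx => hx ▸ (tanh_lt_one _).le⟩

theorem tanh_mul_cwM {β : ℝ} (hβ : 1 < β) : tanh (β * cwM β) = cwM β := by
  obtain ⟨_, -, hx⟩ := exists_pos_tanh_mul_eq_self hβ
  exact (isClosed_setOf_tanh_mul_eq β).csSup_mem ⟨_, hx⟩ (bddAbove_setOf_tanh_mul_eq β)

theorem cwM_pos {β : ℝ} (hβ : 1 < β) : 0 < cwM β := by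
  obtain ⟨x, hxpos, hx⟩ := exists_pos_tanh_mul_eq_self hβ
  exact hxpos.trans_le (le_csSup (bddAbove_setOf_tanh_mul_eq β) hx)

theorem mul_one_sub_sq_lt_one_of_tanh_mul_eq {β m : ℝ} (hm : 0 < m) (hfix : tanh (β * m) = m) :
    β * (1 - m ^ 2) < 1 := by
  set t := β * m with ht
  have hcosh := cosh_pos t
  have hsinh_eq : sinh t = m * cosh t := by
    rw [← hfix, tanh_eq_sinh_div_cosh, div_mul_cancel₀ _ hcosh.ne']
  have htpos : 0 < t := sinh_pos_iff.1 (hsinh_eq ▸ mul_pos hm hcosh)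
  have hsinh := sinh_pos_iff.2 htpos
  have hcosh_sq : (1 - m ^ 2) * cosh t ^ 2 = 1 := by
    linear_combination cosh_sq_sub_sinh_sq t + (sinh t + m * cosh t) * hsinh_eq
  have hprod : β * (1 - m ^ 2) * (sinh t * cosh t) = t := by
    rw [hsinh_eq]; linear_combination t * hcosh_sq
  refine lt_of_mul_lt_mul_right ?_ (mul_pos hsinh hcosh).le
  calc β * (1 - m ^ 2) * (sinh t * cosh t) = t := hprod
    _ < sinh t := self_lt_sinh_iff.2 htpos
    _ ≤ sinh t * cosh t := le_mul_of_one_le_right hsinh.le (one_le_cosh t)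
    _ = 1 * (sinh t * cosh t) := (one_mul _).symm

theorem stmt_4 (β : ℝ) (hβ : 1 < β) :
    β * (1 - (cwM β) ^ 2) < 1 ∧
      deriv (fun x : ℝ => Real.tanh (β * x)) (cwM β) < 1 := by
  have hfix := tanh_mul_cwM hβ
  have hlt := mul_one_sub_sq_lt_one_of_tanh_mul_eq (cwM_pos hβ) hfix
  have hderiv : HasDerivAt (fun x => tanh (β * x)) ((1 - tanh (β * cwM β) ^ 2) * (β * 1))
      (cwM β) := (hasDerivAt_tanh _).comp _ ((hasDerivAt_id' (cwM β)).const_mul β)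
  refine ⟨hlt, ?_⟩
  rw [hderiv.deriv, hfix]
  linarith
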